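/- arXiv:1804.10296 — 2 statements merged into one kernel-verified Lean document; each statement's English description precedes it below -/
import Mathlib

section
/- Let G be a group with elements Y, T₁, …, T_{k−1} satisfying: TᵢTⱼ = TⱼTᵢ for |i−j| ≥ 2; TᵢT_{i+1}Tᵢ = T_{i+1}TᵢT_{i+1} for 1 ≤ i ≤ k−2; Y T₁ Y T₁ = T₁ Y T₁ Y; and Y Tᵢ = Tᵢ Y for 2 ≤ i ≤ k−1. Then the element T_φ = T_{k−1}T_{k−2}⋯T₁ Y T₁⋯T_{k−2}T_{k−1} commutes with Y and with Tᵢ for all 1 ≤ i ≤ k−2. -/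
/-- The descending product `T n * T (n-1) * ⋯ * T 1`. -/
def descProd {G : Type*} [Monoid G] (T : ℕ → G) : ℕ → G
  | 0 => 1
  | n + 1 => T (n + 1) * descProd T n

/-- The ascending product `T 1 * T 2 * ⋯ * T n`. -/
def ascProd {G : Type*} [Monoid G] (T : ℕ → G) : ℕ → G
  | 0 => 1
  | n + 1 => ascProd T n * T (n + 1)

private lemma descProd_commute {G : Type*} [Monoid G] (c : G) (T : ℕ → G) (n : ℕ)
    (h : ∀ m, 1 ≤ m → m ≤ n → Commute c (T m)) : Commute c (descProd T n) := by
  induction n with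
  | zero => simp [descProd]
  | succ n ih =>
    rw [descProd]
    exact (h (n+1) (by omega) (by omega)).mul_right (ih fun m h1 h2 => h m h1 (by omega))

private lemma ascProd_commute {G : Type*} [Monoid G] (c : G) (T : ℕ → G) (n : ℕ)
    (h : ∀ m, 1 ≤ m → m ≤ n → Commute c (T m)) : Commute c (ascProd T n) := by
  induction n with
  | zero => simp [ascProd]
  | succ n ih =>
    rw [ascProd]
    exact (ih fun m h1 h2 => h m h1 (by omega)).mul_right (h (n+1) (by omega) (by omega))

private lemma step_conj {G : Type*} [Monoid G] (c t x : G) (h1 : Commute c t)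
    (h2 : Commute c x) : Commute c (t * x * t) :=
  (h1.mul_right h2).mul_right h1

private lemma braid_conj {G : Type*} [Monoid G] (a b m : G)
    (h : a * b * a = b * a * b) (hm : Commute b m) :
    Commute a (b * a * m * a * b) := by
  show a * (b * a * m * a * b) = (b * a * m * a * b) * a
  calc a * (b * a * m * a * b)
      = (a * b * a) * (m * a * b) := by simp [mul_assoc]
    _ = (b * a * b) * (m * a * b) := by rw [h]
    _ = (b * a) * (b * m) * (a * b) := by simp [mul_assoc]
    _ = (b * a) * (m * b) * (a * b) := by rw [hm.eq]
    _ = (b * a * m) * (b * a * b) := by simp [mul_assoc]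
    _ = (b * a * m) * (a * b * a) := by rw [← h]
    _ = (b * a * m * a * b) * a := by simp [mul_assoc]

private lemma DYA_succ {G : Type*} [Monoid G] (Y : G) (T : ℕ → G) (n : ℕ) :
    descProd T (n + 1) * Y * ascProd T (n + 1) =
      T (n + 1) * (descProd T n * Y * ascProd T n) * T (n + 1) := by
  simp only [descProd, ascProd, mul_assoc]

private lemma DYA_succ2 {G : Type*} [Monoid G] (Y : G) (T : ℕ → G) (j : ℕ) :
    descProd T (j + 2) * Y * ascProd T (j + 2) =
      T (j + 2) * T (j + 1) * (descProd T j * Y * ascProd T j) * T (j + 1) * T (j + 2) := by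
  simp only [descProd, ascProd, mul_assoc]

/-- with `Y, T₁, …, T_{k−1}` satisfying the type-C braid relations,
the element `T_φ = T_{k−1}⋯T₁ Y T₁⋯T_{k−1}` commutes with `Y` and with each `Tᵢ`
for `1 ≤ i ≤ k−2`. -/
theorem Tphi_commutes {G : Type*} [Group G] (k : ℕ) (Y : G) (T : ℕ → G)
    (hcomm : ∀ i j : ℕ, 1 ≤ i → i + 2 ≤ j → j ≤ k - 1 → T i * T j = T j * T i)
    (hbraid : ∀ i : ℕ, 1 ≤ i → i + 1 ≤ k - 1 →
      T i * T (i + 1) * T i = T (i + 1) * T i * T (i + 1))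
    (hY1 : Y * T 1 * Y * T 1 = T 1 * Y * T 1 * Y)
    (hYi : ∀ i : ℕ, 2 ≤ i → i ≤ k - 1 → Y * T i = T i * Y) :
    (descProd T (k - 1) * Y * ascProd T (k - 1)) * Y =
        Y * (descProd T (k - 1) * Y * ascProd T (k - 1)) ∧
      ∀ i : ℕ, 1 ≤ i → i ≤ k - 2 →
        (descProd T (k - 1) * Y * ascProd T (k - 1)) * T i =
          T i * (descProd T (k - 1) * Y * ascProd T (k - 1)) := by
  have key1 : ∀ n, n ≤ k - 1 → Commute Y (descProd T n * Y * ascProd T n) := by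
    intro n
    induction n with
    | zero => intro _; simp [descProd, ascProd]
    | succ n ih =>
      intro hn
      rw [DYA_succ]
      match n, ih with
      | 0, _ =>
        show Y * (T 1 * (descProd T 0 * Y * ascProd T 0) * T 1)
            = (T 1 * (descProd T 0 * Y * ascProd T 0) * T 1) * Y
        simp only [descProd, ascProd, mul_one, one_mul]
        simp only [mul_assoc] at hY1 ⊢
        exact hY1
      | n + 1, ih =>
        exact step_conj _ _ _
          ((hYi (n + 2) (by omega) (by omega)) : Commute Y (T (n + 2)))
          (ih (by omega))
  have key2 : ∀ i, 1 ≤ i → i ≤ k - 2 →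
      ∀ n, i + 1 ≤ n → n ≤ k - 1 → Commute (T i) (descProd T n * Y * ascProd T n) := by
    intro i hi1 hi2 n
    induction n with
    | zero => omega
    | succ n ih =>
      intro hn1 hn2
      rcases Nat.lt_or_ge n (i + 1) with h | h
      · -- base case: n = i
        have hni : n = i := by omega
        obtain ⟨j, rfl⟩ : ∃ j, i = j + 1 := ⟨i - 1, by omega⟩
        subst hni
        rw [DYA_succ2]
        have hM : Commute (T (j + 2)) (descProd T j * Y * ascProd T j) := by
          have hd : ∀ m, 1 ≤ m → m ≤ j → Commute (T (j + 2)) (T m) := fun m h1 h2 =>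
            (hcomm m (j + 2) h1 (by omega) (by omega)).symm
          exact ((descProd_commute _ _ _ hd).mul_right
            ((hYi (j + 2) (by omega) (by omega)).symm :
              Commute (T (j + 2)) Y)).mul_right (ascProd_commute _ _ _ hd)
        exact braid_conj _ _ _ (hbraid (j + 1) (by omega) (by omega)) hM
      · rw [DYA_succ]
        exact step_conj _ _ _
          ((hcomm i (n + 1) hi1 (by omega) (by omega)) : Commute (T i) (T (n + 1)))
          (ih (by omega) (by omega))
  exact ⟨(key1 (k - 1) le_rfl).symm, fun i h1 h2 => (key2 i h1 h2 (k - 1) (by omega) (by omega)).symm⟩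
end

section
/- Let G be a group with elements X, Y, T₁, …, T_{k−1} satisfying: TᵢTⱼ = TⱼTᵢ for |i−j| ≥ 2; TᵢT_{i+1}Tᵢ = T_{i+1}TᵢT_{i+1} for 1 ≤ i ≤ k−2; X T₁ X T₁ = T₁ X T₁ X; Y T₁ Y T₁ = T₁ Y T₁ Y; X Tᵢ = Tᵢ X and Y Tᵢ = Tᵢ Y for 2 ≤ i ≤ k−1; and (T₁ X T₁⁻¹) Y = Y (T₁ X T₁⁻¹). Define Z₁ = X Y and Zᵢ = T_{i−1}⋯T₁ X Y T₁⋯T_{i−1} for 2 ≤ i ≤ k. Then Zᵢ Zⱼ = Zⱼ Zᵢ for all 1 ≤ i, j ≤ k. -/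
namespace ZAux

variable {G : Type*}

lemma commute_desc [Monoid G] (T : ℕ → G) (c : G) (n : ℕ)
    (h : ∀ m, 1 ≤ m → m ≤ n → Commute c (T m)) : Commute c (descProd T n) := by
  induction n with
  | zero => exact Commute.one_right c
  | succ n ih =>
      exact (h (n + 1) (by omega) le_rfl).mul_right (ih fun m h1 h2 => h m h1 (by omega))

lemma commute_asc [Monoid G] (T : ℕ → G) (c : G) (n : ℕ)
    (h : ∀ m, 1 ≤ m → m ≤ n → Commute c (T m)) : Commute c (ascProd T n) := by
  induction n with
  | zero => exact Commute.one_right c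
  | succ n ih =>
      exact (ih fun m h1 h2 => h m h1 (by omega)).mul_right (h (n + 1) (by omega) le_rfl)

/-- The Jucys–Murphy-type element. -/
def Zel [Group G] (X Y : G) (T : ℕ → G) (i : ℕ) : G :=
  descProd T (i - 1) * (X * Y) * ascProd T (i - 1)

lemma Zel_succ [Group G] (X Y : G) (T : ℕ → G) (i : ℕ) (hi : 1 ≤ i) :
    Zel X Y T (i + 1) = T i * Zel X Y T i * T i := by
  obtain ⟨m, rfl⟩ : ∃ m, i = m + 1 := ⟨i - 1, by omega⟩
  simp only [Zel, Nat.add_sub_cancel, descProd, ascProd]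
  group

lemma base [Group G] (a b t : G)
    (r1 : a * t * a * t = t * a * t * a)
    (r2 : b * t * b * t = t * b * t * b)
    (r3 : (t * a * t⁻¹) * b = b * (t * a * t⁻¹)) :
    (a * b) * (t * (a * b) * t) = (t * (a * b) * t) * (a * b) := by
  have hL : (a * b) * (t * (a * b) * t) = a * (t * a) * (b * (t * b)) := by
    calc (a * b) * (t * (a * b) * t)
        = a * (b * (t * a * t⁻¹)) * (t * (b * t)) := by group
      _ = a * ((t * a * t⁻¹) * b) * (t * (b * t)) := by rw [← r3]
      _ = (a * (t * a)) * (t⁻¹ * (b * t * b * t)) := by group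
      _ = (a * (t * a)) * (t⁻¹ * (t * b * t * b)) := by rw [r2]
      _ = a * (t * a) * (b * (t * b)) := by group
  have hR : (t * (a * b) * t) * (a * b) = a * (t * a) * (b * (t * b)) := by
    calc (t * (a * b) * t) * (a * b)
        = t * a * (b * (t * a * t⁻¹)) * (t * b) := by group
      _ = t * a * ((t * a * t⁻¹) * b) * (t * b) := by rw [← r3]
      _ = ((t * a * t * a) * t⁻¹) * (b * (t * b)) := by group
      _ = ((a * t * a * t) * t⁻¹) * (b * (t * b)) := by rw [← r1]
      _ = a * (t * a) * (b * (t * b)) := by group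
  exact hL.trans hR.symm

lemma step [Group G] (z s u : G)
    (hb : s * u * s = u * s * u)
    (hc : u * z = z * u)
    (hIH : z * (s * z * s) = (s * z * s) * z) :
    (s * z * s) * (u * (s * z * s) * u) = (u * (s * z * s) * u) * (s * z * s) := by
  calc (s * z * s) * (u * (s * z * s) * u)
      = s * z * (s * u * s) * (z * (s * u)) := by group
    _ = s * z * (u * s * u) * (z * (s * u)) := by rw [hb]
    _ = s * (z * u) * (s * (u * (z * (s * u)))) := by group
    _ = s * (u * z) * (s * (u * (z * (s * u)))) := by rw [← hc]
    _ = s * u * z * s * (u * z) * (s * u) := by group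
    _ = s * u * z * s * (z * u) * (s * u) := by rw [hc]
    _ = s * u * (z * s * z) * (u * s * u) := by group
    _ = s * u * (z * s * z) * (s * u * s) := by rw [← hb]
    _ = s * u * (z * (s * z * s)) * (u * s) := by group
    _ = s * u * ((s * z * s) * z) * (u * s) := by rw [hIH]
    _ = (s * u * s) * (z * (s * z)) * (u * s) := by group
    _ = (u * s * u) * (z * (s * z)) * (u * s) := by rw [hb]
    _ = u * s * (u * z) * (s * (z * (u * s))) := by group
    _ = u * s * (z * u) * (s * (z * (u * s))) := by rw [hc]
    _ = (u * s * z * u * s) * (z * u) * s := by group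
    _ = (u * s * z * u * s) * (u * z) * s := by rw [← hc]
    _ = (u * (s * z)) * (u * s * u) * (z * s) := by group
    _ = (u * (s * z)) * (s * u * s) * (z * s) := by rw [← hb]
    _ = (u * (s * z * s) * u) * (s * z * s) := by group

lemma main [Group G] (k : ℕ) (X Y : G) (T : ℕ → G)
    (hcomm : ∀ i j : ℕ, 1 ≤ i → i + 2 ≤ j → j ≤ k - 1 → T i * T j = T j * T i)
    (hbraid : ∀ i : ℕ, 1 ≤ i → i + 1 ≤ k - 1 →
      T i * T (i + 1) * T i = T (i + 1) * T i * T (i + 1))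
    (hX1 : X * T 1 * X * T 1 = T 1 * X * T 1 * X)
    (hY1 : Y * T 1 * Y * T 1 = T 1 * Y * T 1 * Y)
    (hXi : ∀ i : ℕ, 2 ≤ i → i ≤ k - 1 → X * T i = T i * X)
    (hYi : ∀ i : ℕ, 2 ≤ i → i ≤ k - 1 → Y * T i = T i * Y)
    (hXY : (T 1 * X * (T 1)⁻¹) * Y = Y * (T 1 * X * (T 1)⁻¹)) :
    ∀ j i : ℕ, 1 ≤ i → i ≤ j → j ≤ k →
      Zel X Y T i * Zel X Y T j = Zel X Y T j * Zel X Y T i := by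
  have hTZ : ∀ i j, 1 ≤ i → i + 1 ≤ j → j ≤ k - 1 → Commute (T j) (Zel X Y T i) := by
    intro i j h1 h2 h3
    have hd : Commute (T j) (descProd T (i - 1)) :=
      commute_desc T (T j) (i - 1) (fun m hm1 hm2 => (hcomm m j hm1 (by omega) h3).symm)
    have ha : Commute (T j) (ascProd T (i - 1)) :=
      commute_asc T (T j) (i - 1) (fun m hm1 hm2 => (hcomm m j hm1 (by omega) h3).symm)
    have hx : Commute (T j) X := (hXi j (by omega) h3).symm
    have hy : Commute (T j) Y := (hYi j (by omega) h3).symm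
    exact (hd.mul_right (hx.mul_right hy)).mul_right ha
  have hadj : ∀ i, 1 ≤ i → i ≤ k - 1 →
      Zel X Y T i * (T i * Zel X Y T i * T i) = (T i * Zel X Y T i * T i) * Zel X Y T i := by
    intro i
    induction i with
    | zero => intro h1 _; exact absurd h1 (by omega)
    | succ n ih =>
      intro h1 h2
      rcases Nat.eq_zero_or_pos n with rfl | hn
      · have h0 : Zel X Y T 1 = X * Y := by simp [Zel, descProd, ascProd]
        rw [h0]
        exact base X Y (T 1) hX1 hY1 hXY
      · rw [Zel_succ X Y T n hn]
        exact step (Zel X Y T n) (T n) (T (n + 1))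
          (hbraid n hn (by omega)) (hTZ n (n + 1) hn le_rfl h2).eq (ih hn (by omega))
  intro j
  induction j with
  | zero => intro i h1 h2 _; exact absurd (h1.trans h2) (by omega)
  | succ n ih =>
    intro i h1 h2 h3
    rcases Nat.lt_or_ge i (n + 1) with hlt | hge
    · have hn : 1 ≤ n := by omega
      rw [Zel_succ X Y T n hn]
      rcases Nat.lt_or_ge i n with hlt2 | hge2
      · have c1 : Commute (Zel X Y T i) (T n) := (hTZ i n h1 (by omega) (by omega)).symm
        have c2 : Commute (Zel X Y T i) (Zel X Y T n) := ih i h1 (by omega) (by omega)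
        exact ((c1.mul_right c2).mul_right c1).eq
      · have hin : i = n := by omega
        subst hin
        exact hadj i h1 (by omega)
    · have hin : i = n + 1 := by omega
      subst hin; rfl

end ZAux

/-- under presentation (b) of the two-boundary braid group, the
Jucys–Murphy-type elements `Zᵢ = T_{i−1}⋯T₁ X Y T₁⋯T_{i−1}` (so `Z₁ = X Y`)
pairwise commute. -/
theorem Z_elements_commute {G : Type*} [Group G] (k : ℕ) (X Y : G) (T : ℕ → G)
    (hcomm : ∀ i j : ℕ, 1 ≤ i → i + 2 ≤ j → j ≤ k - 1 → T i * T j = T j * T i)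
    (hbraid : ∀ i : ℕ, 1 ≤ i → i + 1 ≤ k - 1 →
      T i * T (i + 1) * T i = T (i + 1) * T i * T (i + 1))
    (hX1 : X * T 1 * X * T 1 = T 1 * X * T 1 * X)
    (hY1 : Y * T 1 * Y * T 1 = T 1 * Y * T 1 * Y)
    (hXi : ∀ i : ℕ, 2 ≤ i → i ≤ k - 1 → X * T i = T i * X)
    (hYi : ∀ i : ℕ, 2 ≤ i → i ≤ k - 1 → Y * T i = T i * Y)
    (hXY : (T 1 * X * (T 1)⁻¹) * Y = Y * (T 1 * X * (T 1)⁻¹)) :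
    ∀ i j : ℕ, 1 ≤ i → i ≤ k → 1 ≤ j → j ≤ k →
      (descProd T (i - 1) * (X * Y) * ascProd T (i - 1)) *
          (descProd T (j - 1) * (X * Y) * ascProd T (j - 1)) =
        (descProd T (j - 1) * (X * Y) * ascProd T (j - 1)) *
          (descProd T (i - 1) * (X * Y) * ascProd T (i - 1)) := by
  intro i j hi hik hj hjk
  rcases le_total i j with h | h
  · exact ZAux.main k X Y T hcomm hbraid hX1 hY1 hXi hYi hXY j i hi h hjk
  · exact (ZAux.main k X Y T hcomm hbraid hX1 hY1 hXi hYi hXY i j hj h hik).symm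
end
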